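/- If a permutation τ of {1,…,n} is obtained from a permutation σ of {1,…,n} by a Type II move at positions p < q, and the vertices p and q lie in the same connected component of the permutation graph G_σ (i.e., p and q are joined by a path in G_σ), then the permutation graph G_τ contains a cycle (G_τ is not acyclic). -/

import Mathlib

/-- The permutation graph of `σ`: vertices `i < j` are adjacent iff `σ i > σ j`. -/
def permGraph {n : ℕ} (σ : Equiv.Perm (Fin n)) : SimpleGraph (Fin n) :=
  SimpleGraph.fromRel (fun i j => i < j ∧ σ j < σ i)

/-- `τ` is obtained from `σ` by a Type II move at positions `p < q`:
`σ p < σ q`, every value strictly between `σ p` and `σ q` occurs at a position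
smaller than `q`, and `τ` is `σ` with the values at positions `p` and `q` swapped. -/
def PermTypeIIAt {n : ℕ} (σ τ : Equiv.Perm (Fin n)) (p q : Fin n) : Prop :=
  p < q ∧ σ p < σ q ∧ (∀ v : Fin n, σ p < v → v < σ q → σ.symm v < q) ∧
    τ = σ * Equiv.swap p q

/-- `τ` is obtained from `σ` by a Type II move. -/
def PermTypeII {n : ℕ} (σ τ : Equiv.Perm (Fin n)) : Prop :=
  ∃ p q : Fin n, PermTypeIIAt σ τ p q

/-- `σ` is Type-I-below `τ`: there is a strictly increasing choice of positions
`f` with `τ (f j) ≥ σ j` for all `j`, and `σ` order isomorphic to the subword of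
`τ` on those positions. -/
def TypeIBelow {n m : ℕ} (σ : Equiv.Perm (Fin n)) (τ : Equiv.Perm (Fin m)) : Prop :=
  ∃ f : Fin n → Fin m, StrictMono f ∧ (∀ j, (σ j : ℕ) ≤ (τ (f j) : ℕ)) ∧
    ∀ j k, σ j < σ k ↔ τ (f j) < τ (f k)

/-- One step of the order `≤ᵢ` on permutations of arbitrary sizes: either a
Type-I-below relation or (for equal sizes) a Type II move. -/
def PermStep : (Σ n : ℕ, Equiv.Perm (Fin n)) → (Σ n : ℕ, Equiv.Perm (Fin n)) → Prop :=
  fun x y => TypeIBelow x.2 y.2 ∨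
    ∃ h : x.1 = y.1, PermTypeII (Equiv.permCongr (finCongr h) x.2) y.2

/-- The order `≤ᵢ` on permutations of arbitrary sizes: the reflexive–transitive
closure of the union of the Type-I-below relation and the Type II move relation. -/
def PermLeI : (Σ n : ℕ, Equiv.Perm (Fin n)) → (Σ n : ℕ, Equiv.Perm (Fin n)) → Prop :=
  Relation.ReflTransGen PermStep

/-!
In `G_τ` the swapped positions `p, q` are adjacent, and every edge of `G_σ` not at `p`
survives the move. Take a path `p, v, …, q` in `G_σ`; it has length at least two, since
`p, q` form a non-inversion of `σ`. Its tail from `v` to `q` avoids `p`, so it is a path in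
`G_τ`. If the edge `p v` survives, this tail and the edges `v p`, `p q` close a cycle. If it
is lost, then `σ p < σ v < σ q`, so `v q` is an edge of `G_τ` but not of `G_σ`; the tail then
has length at least two and closes a cycle with the edge `q v`.
-/

namespace SimpleGraph

variable {V : Type*} {G : SimpleGraph V} {a b : V}

lemma IsAcyclic.length_eq_one_of_isPath_of_adj (hG : G.IsAcyclic) {W : G.Walk a b}
    (hW : W.IsPath) (hab : G.Adj a b) : W.length = 1 := by
  have := (hG.subsingleton_path a b).elim ⟨W, hW⟩ (Path.singleton hab)
  simpa using congrArg (fun P : G.Path a b => P.1.length) this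

end SimpleGraph

lemma permGraph_adj_of_lt {n : ℕ} {ρ : Equiv.Perm (Fin n)} {i j : Fin n} (hij : i < j) :
    (permGraph ρ).Adj i j ↔ ρ j < ρ i := by
  simp [permGraph, SimpleGraph.fromRel_adj, hij, hij.ne, not_lt_of_gt hij]

namespace PermTypeIIAt

variable {n : ℕ} {σ τ : Equiv.Perm (Fin n)} {p q : Fin n}

lemma apply_left (h : PermTypeIIAt σ τ p q) : τ p = σ q := by
  simp [h.2.2.2]

lemma apply_right (h : PermTypeIIAt σ τ p q) : τ q = σ p := by
  simp [h.2.2.2]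

lemma apply_of_ne (h : PermTypeIIAt σ τ p q) {x : Fin n} (hp : x ≠ p) (hq : x ≠ q) :
    τ x = σ x := by
  simp [h.2.2.2, Equiv.swap_apply_of_ne_of_ne hp hq]

lemma adj (h : PermTypeIIAt σ τ p q) : (permGraph τ).Adj p q := by
  rw [permGraph_adj_of_lt h.1, h.apply_left, h.apply_right]
  exact h.2.1

lemma not_adj (h : PermTypeIIAt σ τ p q) : ¬ (permGraph σ).Adj p q := by
  rw [permGraph_adj_of_lt h.1, not_lt]
  exact h.2.1.le

lemma adj_of_adj_of_lt (h : PermTypeIIAt σ τ p q) {a b : Fin n} (hab : a < b) (ha : a ≠ p)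
    (hb : b ≠ p) (hσ : (permGraph σ).Adj a b) : (permGraph τ).Adj a b := by
  rw [permGraph_adj_of_lt hab] at hσ ⊢
  rcases eq_or_ne b q with rfl | hbq
  · rw [h.apply_right, h.apply_of_ne ha hab.ne]
    exact h.2.1.trans hσ
  rcases eq_or_ne a q with rfl | haq
  · rw [h.apply_right, h.apply_of_ne hb hbq]
    -- `σ b` cannot lie strictly between `σ p` and `σ q`: its position `b` is beyond `q`.
    refine lt_of_le_of_ne (not_lt.1 fun hpb => ?_) (σ.injective.ne hb)
    simpa using (h.2.2.1 (σ b) hpb hσ).trans hab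
  · rw [h.apply_of_ne ha haq, h.apply_of_ne hb hbq]
    exact hσ

lemma adj_of_adj (h : PermTypeIIAt σ τ p q) {a b : Fin n} (ha : a ≠ p) (hb : b ≠ p)
    (hσ : (permGraph σ).Adj a b) : (permGraph τ).Adj a b := by
  rcases lt_or_gt_of_ne hσ.ne with hab | hba
  · exact h.adj_of_adj_of_lt hab ha hb hσ
  · exact (h.adj_of_adj_of_lt hba hb ha hσ.symm).symm

lemma mem_edgeSet_of_mem_edges (h : PermTypeIIAt σ τ p q) {a b : Fin n}
    {W : (permGraph σ).Walk a b} (hW : p ∉ W.support) :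
    ∀ e ∈ W.edges, e ∈ (permGraph τ).edgeSet := by
  intro e he
  induction e using Sym2.ind with
  | h x y =>
    have hx : x ≠ p := fun hx => hW (hx ▸ W.fst_mem_support_of_mem_edges he)
    have hy : y ≠ p := fun hy => hW (hy ▸ W.snd_mem_support_of_mem_edges he)
    exact h.adj_of_adj hx hy (W.adj_of_mem_edges he)

/-- A lost edge `p v` forces `σ p < σ v < σ q`, which trades it for the new edge `v q`. -/
lemma adj_right_of_not_adj_left (h : PermTypeIIAt σ τ p q) {v : Fin n}
    (hσ : (permGraph σ).Adj p v) (hτ : ¬ (permGraph τ).Adj p v) :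
    (permGraph τ).Adj v q ∧ ¬ (permGraph σ).Adj v q := by
  have hvp : v ≠ p := hσ.ne.symm
  rcases lt_or_gt_of_ne hvp with hv | hv
  · have hvq : v < q := hv.trans h.1
    rw [SimpleGraph.adj_comm, permGraph_adj_of_lt hv, h.apply_of_ne hvp hvq.ne, h.apply_left,
      not_lt] at hτ
    rw [SimpleGraph.adj_comm, permGraph_adj_of_lt hv] at hσ
    rw [permGraph_adj_of_lt hvq, permGraph_adj_of_lt hvq, h.apply_right,
      h.apply_of_ne hvp hvq.ne, not_lt]
    exact ⟨hσ, hτ⟩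
  · rw [permGraph_adj_of_lt hv] at hσ
    have hvq : v ≠ q := by
      rintro rfl
      exact absurd hσ (not_lt.2 h.2.1.le)
    refine absurd ?_ hτ
    rw [permGraph_adj_of_lt hv, h.apply_left, h.apply_of_ne hvp hvq]
    exact hσ.trans h.2.1

end PermTypeIIAt

/-- If `τ` is obtained from `σ` by a Type II move at positions
`p < q`, and `p` and `q` lie in the same connected component of `G_σ` (are
joined by a path in `G_σ`), then `G_τ` contains a cycle (is not acyclic). -/
theorem typeII_on_connected_creates_cycle {n : ℕ} (σ τ : Equiv.Perm (Fin n))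
    (p q : Fin n) (h : PermTypeIIAt σ τ p q)
    (hr : (permGraph σ).Reachable p q) :
    ¬ (permGraph τ).IsAcyclic := by
  intro hτ
  obtain ⟨W, hW⟩ := hr.some.toPath
  cases W with
  | nil => exact h.1.ne rfl
  | @cons _ v _ hpv W' =>
    obtain ⟨hW', hpW'⟩ := SimpleGraph.Walk.cons_isPath_iff _ _ |>.1 hW
    set W₂ := W'.transfer (permGraph τ) (h.mem_edgeSet_of_mem_edges hpW')
    have hW₂ : W₂.IsPath := hW'.transfer _
    have hlen : W₂.length = W'.length := W'.length_transfer _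
    by_cases hpv' : (permGraph τ).Adj p v
    · have hpW₂ : p ∉ W₂.support := by simpa [W₂] using hpW'
      have hcycle := hτ.length_eq_one_of_isPath_of_adj (hW₂.cons (h := hpv') hpW₂) h.adj
      rw [SimpleGraph.Walk.length_cons, hlen] at hcycle
      have hvq : v = q := SimpleGraph.Walk.eq_of_length_eq_zero (by omega : W'.length = 0)
      exact h.not_adj (hvq ▸ hpv)
    · obtain ⟨hvq, hvq'⟩ := h.adj_right_of_not_adj_left hpv hpv'
      have htail := hτ.length_eq_one_of_isPath_of_adj hW₂ hvq
      exact hvq' (SimpleGraph.Walk.adj_of_length_eq_one (hlen ▸ htail))
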